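/- Let A be an n×n complex matrix partitioned into 2×2 blocks with A_{11} a square invertible diagonal block, and suppose Re A is positive definite. Then Re(A/A_{11}) ≥ (Re A)/(Re A_{11}), where A/A_{11} = A_{22} − A_{21} A_{11}^{-1} A_{12} denotes the Schur complement. -/

import Mathlib

open Matrix ComplexOrder

/-- The Hermitian real part `(A + Aᴴ)/2` of a complex matrix. -/
noncomputable def matRe {p q : ℕ} (A : Matrix (Fin p ⊕ Fin q) (Fin p ⊕ Fin q) ℂ) :
    Matrix (Fin p ⊕ Fin q) (Fin p ⊕ Fin q) ℂ :=
  (1 / 2 : ℂ) • (A + Aᴴ)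

/-- The Schur complement `A/A₁₁ = A₂₂ - A₂₁ A₁₁⁻¹ A₁₂` of the (1,1) block. -/
noncomputable def schur {p q : ℕ} (A : Matrix (Fin p ⊕ Fin q) (Fin p ⊕ Fin q) ℂ) :
    Matrix (Fin q) (Fin q) ℂ :=
  A.toBlocks₂₂ - A.toBlocks₂₁ * (A.toBlocks₁₁)⁻¹ * A.toBlocks₁₂

/-!
With `v = (-A₁₁⁻¹ A₁₂ y, y)` one has `A v = (0, (A/A₁₁) y)`, so `y* (A/A₁₁) y = v* A v`, and taking
real parts `y* Re(A/A₁₁) y = v* (Re A) v`. For the Hermitian matrix `H = Re A` with positive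
definite `H₁₁`, completing the square gives `v* H v ≥ y* (H/H₁₁) y` for every `v` extending `y`.
-/

namespace Matrix

variable {m n α : Type*}

theorem IsHermitian.toBlocks₂₁_eq [InvolutiveStar α] {M : Matrix (m ⊕ n) (m ⊕ n) α}
    (hM : M.IsHermitian) : M.toBlocks₂₁ = M.toBlocks₁₂ᴴ := by
  rw [← fromBlocks_toBlocks M, isHermitian_fromBlocks_iff] at hM
  exact hM.2.1.symm

variable [Fintype m] [DecidableEq m]

noncomputable def schurComplement₁₁ [CommRing α] (M : Matrix (m ⊕ n) (m ⊕ n) α) : Matrix n n α :=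
  M.toBlocks₂₂ - M.toBlocks₂₁ * M.toBlocks₁₁⁻¹ * M.toBlocks₁₂

section CommRing

variable [CommRing α]

theorem mulVec_sumElim_neg_inv_mul_mulVec [Fintype n] (M : Matrix (m ⊕ n) (m ⊕ n) α)
    (h₁₁ : IsUnit M.toBlocks₁₁) (y : n → α) :
    M *ᵥ Sum.elim (-((M.toBlocks₁₁⁻¹ * M.toBlocks₁₂) *ᵥ y)) y =
      Sum.elim (0 : m → α) (M.schurComplement₁₁ *ᵥ y) := by
  conv_lhs => enter [1]; rw [← fromBlocks_toBlocks M]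
  rw [fromBlocks_mulVec, Sum.elim_comp_inl, Sum.elim_comp_inr, mulVec_neg, mulVec_neg,
    mulVec_mulVec, mulVec_mulVec,
    mul_nonsing_inv_cancel_left _ _ ((isUnit_iff_isUnit_det _).1 h₁₁), neg_add_cancel,
    schurComplement₁₁, sub_mulVec, ← Matrix.mul_assoc, neg_add_eq_sub]

theorem dotProduct_mulVec_sumElim_neg_inv_mul_mulVec [StarRing α] [Fintype n]
    (M : Matrix (m ⊕ n) (m ⊕ n) α) (h₁₁ : IsUnit M.toBlocks₁₁) (y : n → α) :
    star (Sum.elim (-((M.toBlocks₁₁⁻¹ * M.toBlocks₁₂) *ᵥ y)) y) ⬝ᵥ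
        (M *ᵥ Sum.elim (-((M.toBlocks₁₁⁻¹ * M.toBlocks₁₂) *ᵥ y)) y) =
      star y ⬝ᵥ (M.schurComplement₁₁ *ᵥ y) := by
  rw [mulVec_sumElim_neg_inv_mul_mulVec M h₁₁, Function.star_sumElim, sumElim_dotProduct_sumElim,
    dotProduct_zero, zero_add]

theorem IsHermitian.schurComplement₁₁ [StarRing α] {M : Matrix (m ⊕ n) (m ⊕ n) α}
    (hM : M.IsHermitian) : M.schurComplement₁₁.IsHermitian := by
  rw [Matrix.schurComplement₁₁, hM.toBlocks₂₁_eq]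
  exact (hM.submatrix Sum.inr).sub
    (isHermitian_conjTranspose_mul_mul _ (hM.submatrix Sum.inl).inv)

end CommRing

theorem IsHermitian.dotProduct_schurComplement₁₁_mulVec_le [Fintype n] [Field α] [PartialOrder α]
    [StarRing α] [StarOrderedRing α] {M : Matrix (m ⊕ n) (m ⊕ n) α} (hM : M.IsHermitian)
    (h₁₁ : M.toBlocks₁₁.PosDef) (v : m ⊕ n → α) :
    star (v ∘ Sum.inr) ⬝ᵥ (M.schurComplement₁₁ *ᵥ (v ∘ Sum.inr)) ≤ star v ⬝ᵥ (M *ᵥ v) := by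
  have := h₁₁.isUnit.invertible
  have hblocks : M = Matrix.fromBlocks M.toBlocks₁₁ M.toBlocks₁₂ M.toBlocks₁₂ᴴ M.toBlocks₂₂ := by
    rw [← hM.toBlocks₂₁_eq, fromBlocks_toBlocks]
  rw [Matrix.schurComplement₁₁, hM.toBlocks₂₁_eq, dotProduct_mulVec, dotProduct_mulVec,
    ← Sum.elim_comp_inl_inr v]
  conv_rhs => rw [hblocks, schur_complement_eq₁₁ _ _ _ _ h₁₁.1]
  refine le_add_of_nonneg_left ?_
  rw [← dotProduct_mulVec]
  exact h₁₁.posSemidef.dotProduct_mulVec_nonneg _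

variable {𝕜 : Type*} [RCLike 𝕜]

theorem isHermitian_half_smul_add_conjTranspose (M : Matrix n n 𝕜) :
    ((1 / 2 : 𝕜) • (M + Mᴴ)).IsHermitian :=
  (isHermitian_add_transpose_self M).smul (by simp [IsSelfAdjoint])

theorem dotProduct_half_smul_add_conjTranspose_mulVec [Fintype n] (M : Matrix n n 𝕜)
    (x : n → 𝕜) :
    star x ⬝ᵥ (((1 / 2 : 𝕜) • (M + Mᴴ)) *ᵥ x) = RCLike.re (star x ⬝ᵥ (M *ᵥ x)) := by
  have hconj : star (star x ⬝ᵥ (M *ᵥ x)) = star x ⬝ᵥ (Mᴴ *ᵥ x) := by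
    rw [star_dotProduct, star_star, star_mulVec, dotProduct_mulVec, dotProduct_comm]
  rw [smul_mulVec, add_mulVec, dotProduct_smul, dotProduct_add, ← hconj, RCLike.re_eq_add_conj,
    RCLike.star_def, smul_eq_mul]
  ring

end Matrix

theorem re_schur_ge_schur_re {p q : ℕ} (A : Matrix (Fin p ⊕ Fin q) (Fin p ⊕ Fin q) ℂ)
    (hA11 : IsUnit A.toBlocks₁₁) (hA : (matRe A).PosDef) :
    (((1 / 2 : ℂ) • (schur A + (schur A)ᴴ)) - schur (matRe A)).PosSemidef := by
  -- `schur B` unfolds to `B.schurComplement₁₁`, so the lemmas above apply to it as they stand.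
  refine PosSemidef.of_dotProduct_mulVec_nonneg ((isHermitian_half_smul_add_conjTranspose _).sub
    hA.1.schurComplement₁₁) fun y => ?_
  set v := Sum.elim (-((A.toBlocks₁₁⁻¹ * A.toBlocks₁₂) *ᵥ y)) y
  rw [sub_mulVec, dotProduct_sub, sub_nonneg]
  calc star y ⬝ᵥ ((matRe A).schurComplement₁₁ *ᵥ y)
      ≤ star v ⬝ᵥ (matRe A *ᵥ v) :=
        hA.1.dotProduct_schurComplement₁₁_mulVec_le (hA.submatrix Sum.inl_injective) v
    _ = RCLike.re (star v ⬝ᵥ (A *ᵥ v)) := dotProduct_half_smul_add_conjTranspose_mulVec A v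
    _ = RCLike.re (star y ⬝ᵥ (A.schurComplement₁₁ *ᵥ y)) := by
      rw [dotProduct_mulVec_sumElim_neg_inv_mul_mulVec A hA11]
    _ = star y ⬝ᵥ (((1 / 2 : ℂ) • (A.schurComplement₁₁ + A.schurComplement₁₁ᴴ)) *ᵥ y) :=
      (dotProduct_half_smul_add_conjTranspose_mulVec _ y).symm
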